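/- For every real number x with x > 1: P_k(x) > 0 for all k ≥ 0; the sequence k ↦ P*_k(x)/P_k(x) is strictly increasing for k ≥ 1; and consequently P*_k(x)/P_k(x) < (1/2)·log((x+1)/(x-1)) for every k ≥ 1. -/

import Mathlib

open Polynomial

/-- Legendre polynomials: `(k+1)·y_{k+1}(x) = (2k+1)·x·y_k(x) - k·y_{k-1}(x)`,
`P_0 = 1`, `P_1 = x`. -/
noncomputable def legP : ℕ → Polynomial ℝ
  | 0 => 1
  | 1 => X
  | (k+2) => C ((2 * (k : ℝ) + 3) / ((k : ℝ) + 2)) * (X * legP (k+1))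
      - C (((k : ℝ) + 1) / ((k : ℝ) + 2)) * legP k

/-- Associated (numerator) Legendre polynomials: same recurrence,
`P*_0 = 0`, `P*_1 = 1`. -/
noncomputable def legPs : ℕ → Polynomial ℝ
  | 0 => 0
  | 1 => 1
  | (k+2) => C ((2 * (k : ℝ) + 3) / ((k : ℝ) + 2)) * (X * legPs (k+1))
      - C (((k : ℝ) + 1) / ((k : ℝ) + 2)) * legPs k

/-! ### Basic recurrences -/

lemma legP_eval_rec (k : ℕ) (x : ℝ) :
    ((k:ℝ)+2) * (legP (k+2)).eval x
      = (2*(k:ℝ)+3) * (x * (legP (k+1)).eval x) - ((k:ℝ)+1) * (legP k).eval x := by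
  have h2 : ((k:ℝ)+2) ≠ 0 := by positivity
  rw [show legP (k+2) = C ((2 * (k : ℝ) + 3) / ((k : ℝ) + 2)) * (X * legP (k+1))
      - C (((k : ℝ) + 1) / ((k : ℝ) + 2)) * legP k from rfl]
  simp only [eval_sub, eval_mul, eval_C, eval_X]
  field_simp

lemma legPs_eval_rec (k : ℕ) (x : ℝ) :
    ((k:ℝ)+2) * (legPs (k+2)).eval x
      = (2*(k:ℝ)+3) * (x * (legPs (k+1)).eval x) - ((k:ℝ)+1) * (legPs k).eval x := by
  have h2 : ((k:ℝ)+2) ≠ 0 := by positivity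
  rw [show legPs (k+2) = C ((2 * (k : ℝ) + 3) / ((k : ℝ) + 2)) * (X * legPs (k+1))
      - C (((k : ℝ) + 1) / ((k : ℝ) + 2)) * legPs k from rfl]
  simp only [eval_sub, eval_mul, eval_C, eval_X]
  field_simp

lemma legP_rec (k : ℕ) : C ((k:ℝ)+2) * legP (k+2)
    = C (2*(k:ℝ)+3) * (X * legP (k+1)) - C ((k:ℝ)+1) * legP k := by
  have h2 : ((k:ℝ)+2) ≠ 0 := by positivity
  rw [show legP (k+2) = C ((2 * (k : ℝ) + 3) / ((k : ℝ) + 2)) * (X * legP (k+1))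
      - C (((k : ℝ) + 1) / ((k : ℝ) + 2)) * legP k from rfl]
  have e : ∀ (a : ℝ) (p : Polynomial ℝ),
      C ((k:ℝ)+2) * (C (a/((k:ℝ)+2)) * p) = C a * p := by
    intro a p
    rw [← mul_assoc, ← C_mul, mul_div_cancel₀ _ h2]
  rw [mul_sub, e, e]

/-! ### Positivity and monotonicity of `P_k(x)` for `x > 1` -/

lemma legP_pos_mono {x : ℝ} (hx : 1 < x) :
    ∀ k : ℕ, 0 < (legP k).eval x ∧ (legP k).eval x < (legP (k+1)).eval x := by
  intro k
  induction k with
  | zero => simp [legP, hx]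
  | succ n ih =>
    obtain ⟨h0, h1⟩ := ih
    have h2 := legP_eval_rec n x
    have hn : (0:ℝ) ≤ (n:ℝ) := Nat.cast_nonneg n
    constructor
    · linarith
    · have hp1 : 0 < (legP (n+1)).eval x := lt_trans h0 h1
      have key : (0:ℝ) < (2*(n:ℝ)+3) * ((legP (n+1)).eval x * (x-1)) :=
        mul_pos (by positivity) (mul_pos hp1 (by linarith))
      nlinarith [key]

/-! ### Wronskian identity -/

lemma leg_wronskian {x : ℝ} :
    ∀ k : ℕ, (legPs (k+1)).eval x * (legP k).eval x
      - (legPs k).eval x * (legP (k+1)).eval x = 1/((k:ℝ)+1) := by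
  intro k
  induction k with
  | zero => simp [legP, legPs]
  | succ n ih =>
    have hP := legP_eval_rec n x
    have hPs := legPs_eval_rec n x
    have h2 : ((n:ℝ)+2) ≠ 0 := by positivity
    have h1' : ((n:ℝ)+1) ≠ 0 := by positivity
    have key : ((n:ℝ)+2) * ((legPs (n+2)).eval x * (legP (n+1)).eval x
        - (legPs (n+1)).eval x * (legP (n+2)).eval x)
        = ((n:ℝ)+1) * ((legPs (n+1)).eval x * (legP n).eval x
        - (legPs n).eval x * (legP (n+1)).eval x) := by
      linear_combination (legP (n+1)).eval x * hPs - (legPs (n+1)).eval x * hP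
    rw [ih] at key
    have key2 : ((legPs (n+2)).eval x * (legP (n+1)).eval x
        - (legPs (n+1)).eval x * (legP (n+2)).eval x) = 1/((n:ℝ)+2) := by
      field_simp at key ⊢
      linarith
    push_cast
    convert key2 using 2 <;> push_cast <;> ring

/-! ### Derivative identities -/

lemma legP_deriv (n : ℕ) (x : ℝ) :
    (derivative (legP (n+1))).eval x
      = x * (derivative (legP n)).eval x + ((n:ℝ)+1) * (legP n).eval x
    ∧ x * (derivative (legP (n+1))).eval x
      = (derivative (legP n)).eval x + ((n:ℝ)+1) * (legP (n+1)).eval x := by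
  induction n with
  | zero =>
    constructor <;> simp [legP]
  | succ n ih =>
    obtain ⟨ih1, ih2⟩ := ih
    have h2 : ((n:ℝ)+2) ≠ 0 := by positivity
    have hd : ((n:ℝ)+2) * (derivative (legP (n+2))).eval x
        = (2*(n:ℝ)+3) * ((legP (n+1)).eval x + x * (derivative (legP (n+1))).eval x)
          - ((n:ℝ)+1) * (derivative (legP n)).eval x := by
      have h := congrArg (fun p => (derivative p).eval x) (legP_rec n)
      simp only [derivative_mul, derivative_C, derivative_sub, derivative_X, zero_mul,
        one_mul, eval_add, eval_mul, eval_sub, eval_C, eval_X, zero_add, mul_zero] at h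
      linear_combination h
    have hP : ((n:ℝ)+2) * (legP (n+2)).eval x
        = (2*(n:ℝ)+3) * (x * (legP (n+1)).eval x) - ((n:ℝ)+1) * (legP n).eval x :=
      legP_eval_rec n x
    have hi : (derivative (legP (n+2))).eval x
        = x * (derivative (legP (n+1))).eval x + ((n:ℝ)+2) * (legP (n+1)).eval x := by
      have goal' : ((n:ℝ)+2) * (derivative (legP (n+2))).eval x
          = ((n:ℝ)+2) * (x * (derivative (legP (n+1))).eval x
            + ((n:ℝ)+2) * (legP (n+1)).eval x) := by
        linear_combination hd + ((n:ℝ)+1) * ih2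
      have := mul_left_cancel₀ h2 goal'
      linear_combination this
    refine ⟨by push_cast; linear_combination hi, ?_⟩
    push_cast
    linear_combination x * hi + x * ih2 - ih1 - hP

/-! ### Values at the endpoints and `∫ P_n = 0` -/

lemma legP_eval_one : ∀ n : ℕ, (legP n).eval 1 = 1 ∧ (legP (n+1)).eval 1 = 1 := by
  intro n
  induction n with
  | zero => simp [legP]
  | succ n ih =>
    obtain ⟨h0, h1⟩ := ih
    refine ⟨h1, ?_⟩
    have h := legP_eval_rec n 1
    rw [h0, h1] at h
    have h2 : ((n:ℝ)+2) ≠ 0 := by positivity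
    have h' : ((n:ℝ)+2) * (legP (n+2)).eval 1 = ((n:ℝ)+2) * 1 := by linarith
    exact mul_left_cancel₀ h2 h'

lemma legP_eval_negone : ∀ n : ℕ, (legP n).eval (-1) = (-1)^n
    ∧ (legP (n+1)).eval (-1) = (-1)^(n+1) := by
  intro n
  induction n with
  | zero => simp [legP]
  | succ n ih =>
    obtain ⟨h0, h1⟩ := ih
    refine ⟨h1, ?_⟩
    have h := legP_eval_rec n (-1)
    rw [h0, h1] at h
    have h2 : ((n:ℝ)+2) ≠ 0 := by positivity
    have h' : ((n:ℝ)+2) * (legP (n+2)).eval (-1) = ((n:ℝ)+2) * ((-1)^(n+2)) := by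
      rw [h]; ring
    have := mul_left_cancel₀ h2 h'
    simpa using this

lemma integral_poly_deriv (p : Polynomial ℝ) (a b : ℝ) :
    ∫ t in a..b, (derivative p).eval t = p.eval b - p.eval a := by
  apply intervalIntegral.integral_eq_sub_of_hasDerivAt
  · intro t _
    exact p.hasDerivAt t
  · exact (Polynomial.continuous (derivative p)).intervalIntegrable a b

lemma integral_legP_succ (n : ℕ) : ∫ t in (-1:ℝ)..1, (legP (n+1)).eval t = 0 := by
  have hfun : ∀ t : ℝ, (legP (n+1)).eval t
      = (1/(2*(n:ℝ)+3)) * ((derivative (legP (n+2))).eval t - (derivative (legP n)).eval t) := by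
    intro t
    have h1 := (legP_deriv (n+1) t).1
    have h2 := (legP_deriv n t).2
    have h3 : (2*(n:ℝ)+3) ≠ 0 := by positivity
    field_simp
    push_cast at h1
    linear_combination -h1 - h2
  simp_rw [hfun]
  rw [intervalIntegral.integral_const_mul, intervalIntegral.integral_sub
    ((Polynomial.continuous (derivative (legP (n+2)))).intervalIntegrable _ _)
    ((Polynomial.continuous (derivative (legP n))).intervalIntegrable _ _),
    integral_poly_deriv, integral_poly_deriv]
  rcases (legP_eval_one (n+2)) with ⟨e1, _⟩
  rcases (legP_eval_one n) with ⟨e0, _⟩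
  rcases (legP_eval_negone (n+2)) with ⟨o1, _⟩
  rcases (legP_eval_negone n) with ⟨o0, _⟩
  rw [e1, e0, o1, o0]
  have h4 : ((-1:ℝ))^(n+2) = (-1)^n := by ring
  rw [h4]
  ring

/-! ### Moments -/

noncomputable def legM (k n : ℕ) : ℝ := ∫ t in (-1:ℝ)..1, t^n * (legP k).eval t

lemma legM_zero_succ (n : ℕ) : legM 0 (n+1) = legM 1 n := by
  unfold legM
  apply intervalIntegral.integral_congr
  intro t _
  simp [legP]
  ring

lemma legM_rec (k n : ℕ) : (2*(k:ℝ)+3) * legM (k+1) (n+1)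
    = ((k:ℝ)+2) * legM (k+2) n + ((k:ℝ)+1) * legM k n := by
  have key : (2*(k:ℝ)+3) * legM (k+1) (n+1)
      = ∫ t in (-1:ℝ)..1, (((k:ℝ)+2) * (t^n * (legP (k+2)).eval t)
        + ((k:ℝ)+1) * (t^n * (legP k).eval t)) := by
    rw [legM, ← intervalIntegral.integral_const_mul]
    apply intervalIntegral.integral_congr
    intro t _
    have h := legP_eval_rec k t
    simp only [smul_eq_mul]
    linear_combination (-(t^n)) * h
  have c1 : Continuous fun t : ℝ => ((k:ℝ)+2) * (t^n * (legP (k+2)).eval t) :=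
    continuous_const.mul ((continuous_pow n).mul (Polynomial.continuous (legP (k+2))))
  have c2 : Continuous fun t : ℝ => ((k:ℝ)+1) * (t^n * (legP k).eval t) :=
    continuous_const.mul ((continuous_pow n).mul (Polynomial.continuous (legP k)))
  rw [key, intervalIntegral.integral_add (c1.intervalIntegrable _ _) (c2.intervalIntegrable _ _),
    intervalIntegral.integral_const_mul, intervalIntegral.integral_const_mul]
  rfl

lemma legM_nonneg_pos : ∀ n : ℕ, (∀ k, 0 ≤ legM k n) ∧ 0 < legM n n := by
  intro n
  induction n with
  | zero =>
    have h0 : legM 0 0 = 2 := by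
      unfold legM
      simp [legP]
      norm_num
    constructor
    · rintro (_|k)
      · rw [h0]; norm_num
      · have h1 : legM (k+1) 0 = 0 := by
          unfold legM
          rw [show (fun t : ℝ => t^0 * (legP (k+1)).eval t) = fun t => (legP (k+1)).eval t
            from funext fun t => by ring]
          exact integral_legP_succ k
        rw [h1]
    · rw [h0]; norm_num
  | succ n ih =>
    obtain ⟨hnn, hpos⟩ := ih
    have step : ∀ k, 0 ≤ legM k (n+1) := by
      rintro (_|k)
      · rw [legM_zero_succ]; exact hnn 1
      · have h := legM_rec k n
        have h3 : (0:ℝ) < 2*(k:ℝ)+3 := by positivity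
        nlinarith [hnn (k+2), hnn k, mul_nonneg (show (0:ℝ) ≤ (k:ℝ)+2 by positivity) (hnn (k+2)),
          mul_nonneg (show (0:ℝ) ≤ (k:ℝ)+1 by positivity) (hnn k)]
    refine ⟨step, ?_⟩
    have h := legM_rec n n
    have h3 : (0:ℝ) < 2*(n:ℝ)+3 := by positivity
    nlinarith [hnn (n+2), mul_nonneg (show (0:ℝ) ≤ (n:ℝ)+2 by positivity) (hnn (n+2)),
      mul_pos (show (0:ℝ) < (n:ℝ)+1 by positivity) hpos]

/-! ### The second-kind integrals -/

noncomputable def legI (x : ℝ) (k : ℕ) : ℝ := ∫ t in (-1:ℝ)..1, (legP k).eval t / (x - t)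

lemma sub_pos_on_uIcc {x t : ℝ} (hx : 1 < x) (ht : t ∈ Set.uIcc (-1:ℝ) 1) : 0 < x - t := by
  rw [Set.uIcc_of_le (by norm_num)] at ht
  linarith [ht.2]

lemma intInt_div {x : ℝ} (hx : 1 < x) (p : Polynomial ℝ) :
    IntervalIntegrable (fun t => p.eval t / (x - t)) MeasureTheory.volume (-1) 1 := by
  apply ContinuousOn.intervalIntegrable
  apply ContinuousOn.div (Polynomial.continuous p).continuousOn
    (Continuous.continuousOn (by continuity))
  intro t ht
  exact ne_of_gt (sub_pos_on_uIcc hx ht)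

lemma legI_zero {x : ℝ} (hx : 1 < x) : legI x 0 = Real.log ((x+1)/(x-1)) := by
  unfold legI
  rw [show (fun t : ℝ => (legP 0).eval t / (x - t)) = fun t => (fun u : ℝ => u⁻¹) (x - t) by
    funext t; simp [legP, one_div]]
  rw [intervalIntegral.integral_comp_sub_left (fun u : ℝ => u⁻¹) x]
  rw [integral_inv (by rw [Set.uIcc_of_le (by linarith)]; rintro ⟨h1, h2⟩; linarith)]
  norm_num

lemma legI_one {x : ℝ} (hx : 1 < x) :
    legI x 1 = x * Real.log ((x+1)/(x-1)) - 2 := by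
  have key : legI x 1 = ∫ t in (-1:ℝ)..1, (x * ((legP 0).eval t / (x - t)) - 1) := by
    unfold legI
    apply intervalIntegral.integral_congr
    intro t ht
    have hxt : x - t ≠ 0 := ne_of_gt (sub_pos_on_uIcc hx ht)
    simp only [legP, eval_one, eval_X]
    field_simp
    ring
  rw [key, intervalIntegral.integral_sub
    (((intInt_div hx (legP 0)).const_mul x)) (intervalIntegrable_const),
    intervalIntegral.integral_const_mul, intervalIntegral.integral_const]
  rw [← legI, legI_zero hx]
  norm_num

lemma legI_rec {x : ℝ} (hx : 1 < x) (k : ℕ) :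
    ((k:ℝ)+2) * legI x (k+2)
      = (2*(k:ℝ)+3) * (x * legI x (k+1)) - ((k:ℝ)+1) * legI x k := by
  have key : ((k:ℝ)+2) * legI x (k+2)
      = ∫ t in (-1:ℝ)..1, (((2*(k:ℝ)+3)*x) * ((legP (k+1)).eval t / (x - t))
        - ((k:ℝ)+1) * ((legP k).eval t / (x - t))
        - (2*(k:ℝ)+3) * (legP (k+1)).eval t) := by
    rw [legI, ← intervalIntegral.integral_const_mul]
    apply intervalIntegral.integral_congr
    intro t ht
    have hxt : x - t ≠ 0 := ne_of_gt (sub_pos_on_uIcc hx ht)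
    have h := legP_eval_rec k t
    simp only [smul_eq_mul]
    field_simp
    linear_combination h
  rw [key, intervalIntegral.integral_sub (IntervalIntegrable.sub
      ((intInt_div hx (legP (k+1))).const_mul _) ((intInt_div hx (legP k)).const_mul _))
      (((Polynomial.continuous (legP (k+1))).intervalIntegrable _ _).const_mul _),
    intervalIntegral.integral_sub ((intInt_div hx (legP (k+1))).const_mul _)
      ((intInt_div hx (legP k)).const_mul _),
    intervalIntegral.integral_const_mul, intervalIntegral.integral_const_mul,
    intervalIntegral.integral_const_mul, integral_legP_succ]
  rw [← legI, ← legI]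
  ring

/-! ### The error identity -/

lemma legE {x : ℝ} (hx : 1 < x) : ∀ k : ℕ,
    (legP k).eval x * ((1/2) * Real.log ((x+1)/(x-1))) - (legPs k).eval x
      = (1/2) * legI x k ∧
    (legP (k+1)).eval x * ((1/2) * Real.log ((x+1)/(x-1))) - (legPs (k+1)).eval x
      = (1/2) * legI x (k+1) := by
  intro k
  induction k with
  | zero =>
    constructor
    · simp [legP, legPs, legI_zero hx]
    · simp [legP, legPs, legI_one hx]
      ring
  | succ n ih =>
    obtain ⟨ih1, ih2⟩ := ih
    refine ⟨ih2, ?_⟩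
    have hP := legP_eval_rec n x
    have hPs := legPs_eval_rec n x
    have hI := legI_rec hx n
    have h2 : ((n:ℝ)+2) ≠ 0 := by positivity
    have goal' : ((n:ℝ)+2) * ((legP (n+2)).eval x * ((1/2) * Real.log ((x+1)/(x-1)))
        - (legPs (n+2)).eval x) = ((n:ℝ)+2) * ((1/2) * legI x (n+2)) := by
      linear_combination ((1/2) * Real.log ((x+1)/(x-1))) * hP - hPs
        + (2*(n:ℝ)+3) * x * ih2 - ((n:ℝ)+1) * ih1 - (1/2) * hI
    have := mul_left_cancel₀ h2 goal'
    push_cast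
    linear_combination this

/-! ### Positivity of the error integral -/

lemma legI_pos {x : ℝ} (hx : 1 < x) (k : ℕ) : 0 < legI x k := by
  have hx0 : (0:ℝ) < x := by linarith
  -- bound for |P_k| on [-1,1]
  obtain ⟨M, hM0, hM⟩ : ∃ C, 0 ≤ C ∧ ∀ t ∈ Set.Icc (-1:ℝ) 1, |(legP k).eval t| ≤ C := by
    obtain ⟨C, hC⟩ := (isCompact_Icc (a := (-1:ℝ)) (b := 1)).exists_bound_of_continuousOn
      (Polynomial.continuous (legP k)).continuousOn
    exact ⟨C, le_trans (abs_nonneg _) (hC (-1) (by norm_num)), fun t ht => hC t ht⟩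
  -- partial-sum decomposition
  have decomp : ∀ N : ℕ, legI x k = (∑ n ∈ Finset.range N, legM k n / x^(n+1))
      + ∫ t in (-1:ℝ)..1, (t/x)^N * ((legP k).eval t / (x - t)) := by
    intro N
    have hptwise : ∀ t ∈ Set.uIcc (-1:ℝ) 1,
        (legP k).eval t / (x - t) = (∑ n ∈ Finset.range N, t^n * (legP k).eval t / x^(n+1))
          + (t/x)^N * ((legP k).eval t / (x - t)) := by
      intro t ht
      have hxtpos := sub_pos_on_uIcc hx ht
      rw [Set.uIcc_of_le (by norm_num)] at ht
      have hxt : x - t ≠ 0 := ne_of_gt hxtpos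
      have hx0' : x ≠ 0 := by positivity
      have hxN : x^N ≠ 0 := pow_ne_zero _ hx0'
      have htx : t - x ≠ 0 := by intro h; apply hxt; linarith
      have hne : t / x ≠ 1 := by
        intro h
        rw [div_eq_one_iff_eq hx0'] at h
        exact hxt (by rw [h]; ring)
      have hgeo := geom_sum_eq hne N
      have hsum : ∑ n ∈ Finset.range N, t^n * (legP k).eval t / x^(n+1)
          = (∑ n ∈ Finset.range N, (t/x)^n) * ((legP k).eval t / x) := by
        rw [Finset.sum_mul]
        apply Finset.sum_congr rfl
        intro n _
        rw [div_pow, pow_succ]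
        ring
      rw [hsum, hgeo]
      have h1 : t/x - 1 ≠ 0 := sub_ne_zero.2 hne
      have h2 : x*x^N*t - x^2*x^N ≠ 0 := by
        have e : x*x^N*t - x^2*x^N = (x*x^N)*(t-x) := by ring
        rw [e]
        exact mul_ne_zero (mul_ne_zero hx0' hxN) htx
      field_simp
      ring
    have hint_sum : ∀ n : ℕ, IntervalIntegrable
        (fun t : ℝ => t^n * (legP k).eval t / x^(n+1)) MeasureTheory.volume (-1) 1 :=
      fun n => (((continuous_pow n).mul (Polynomial.continuous (legP k))).div_const
        _).intervalIntegrable _ _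
    have hint_rem : IntervalIntegrable
        (fun t : ℝ => (t/x)^N * ((legP k).eval t / (x - t))) MeasureTheory.volume (-1) 1 := by
      apply ContinuousOn.intervalIntegrable
      apply ContinuousOn.mul ((continuous_pow N).comp (continuous_id.div_const x)).continuousOn
      apply ContinuousOn.div (Polynomial.continuous (legP k)).continuousOn
        (Continuous.continuousOn (by continuity))
      intro t ht
      exact ne_of_gt (sub_pos_on_uIcc hx ht)
    calc legI x k = ∫ t in (-1:ℝ)..1, ((∑ n ∈ Finset.range N, t^n * (legP k).eval t / x^(n+1))
          + (t/x)^N * ((legP k).eval t / (x - t))) :=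
        intervalIntegral.integral_congr hptwise
      _ = (∑ n ∈ Finset.range N, legM k n / x^(n+1))
          + ∫ t in (-1:ℝ)..1, (t/x)^N * ((legP k).eval t / (x - t)) := by
        have hint1 : IntervalIntegrable
            (fun t : ℝ => ∑ n ∈ Finset.range N, t^n * (legP k).eval t / x^(n+1))
            MeasureTheory.volume (-1) 1 := by
          have h := IntervalIntegrable.sum (Finset.range N)
            (fun n (_ : n ∈ Finset.range N) => hint_sum n)
          rwa [Finset.sum_fn] at h
        rw [intervalIntegral.integral_add hint1 hint_rem]
        congr 1
        rw [intervalIntegral.integral_finset_sum (fun n _ => hint_sum n)]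
        apply Finset.sum_congr rfl
        intro n _
        rw [intervalIntegral.integral_div]
        rfl
  -- remainder bound
  have hrem : ∀ N : ℕ, |∫ t in (-1:ℝ)..1, (t/x)^N * ((legP k).eval t / (x - t))|
      ≤ (2 * M / (x-1)) * (x⁻¹)^N := by
    intro N
    have hb : ∀ t ∈ Set.uIoc (-1:ℝ) 1,
        ‖(t/x)^N * ((legP k).eval t / (x - t))‖ ≤ (x⁻¹)^N * (M / (x-1)) := by
      intro t ht
      rw [Set.uIoc_of_le (by norm_num)] at ht
      have ht1 : |t| ≤ 1 := abs_le.2 ⟨le_of_lt ht.1, ht.2⟩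
      have hxt : (0:ℝ) < x - t := by linarith [ht.2]
      have hxt1 : x - 1 ≤ x - t := by linarith [ht.2]
      have hMt : |(legP k).eval t| ≤ M := hM t ⟨le_of_lt ht.1, ht.2⟩
      rw [Real.norm_eq_abs, abs_mul, abs_pow,
        show |(legP k).eval t/(x-t)| = |(legP k).eval t|/(x-t) by rw [abs_div, abs_of_pos hxt]]
      have h1 : |t/x| ≤ x⁻¹ := by
        rw [abs_div, abs_of_pos hx0, inv_eq_one_div]
        gcongr
      have h2 : |t/x|^N ≤ (x⁻¹)^N := pow_le_pow_left₀ (abs_nonneg _) h1 N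
      have h3 : |(legP k).eval t| / (x - t) ≤ M / (x-1) := by
        gcongr
      exact mul_le_mul h2 h3 (by positivity) (by positivity)
    have := intervalIntegral.norm_integral_le_of_norm_le_const hb
    rw [Real.norm_eq_abs] at this
    calc |∫ t in (-1:ℝ)..1, (t/x)^N * ((legP k).eval t / (x - t))|
        ≤ (x⁻¹)^N * (M / (x-1)) * |1 - (-1:ℝ)| := this
      _ = (2 * M / (x-1)) * (x⁻¹)^N := by
          rw [show |1 - (-1:ℝ)| = 2 by norm_num]
          ring
  -- pass to the limit
  have hxk : (0:ℝ) < x^(k+1) := by positivity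
  have key : ∀ N : ℕ, k+1 ≤ N →
      legM k k / x^(k+1) - (2*M/(x-1))*(x⁻¹)^N ≤ legI x k := by
    intro N hN
    have hd := decomp N
    have hsum_ge : legM k k / x^(k+1) ≤ ∑ n ∈ Finset.range N, legM k n / x^(n+1) := by
      apply Finset.single_le_sum (f := fun n => legM k n / x^(n+1))
      · intro n _
        exact div_nonneg ((legM_nonneg_pos n).1 k) (by positivity)
      · exact Finset.mem_range.2 (by omega)
    have hr := hrem N
    have habs := neg_abs_le (∫ t in (-1:ℝ)..1, (t/x)^N * ((legP k).eval t / (x - t)))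
    linarith
  have h0 : Filter.Tendsto (fun N : ℕ => (x⁻¹)^N) Filter.atTop (nhds 0) :=
    tendsto_pow_atTop_nhds_zero_of_lt_one (by positivity) (inv_lt_one_of_one_lt₀ hx)
  have hlim : Filter.Tendsto (fun N : ℕ => legM k k / x^(k+1) - (2*M/(x-1))*(x⁻¹)^N)
      Filter.atTop (nhds (legM k k / x^(k+1) - (2*M/(x-1))*0)) :=
    Filter.Tendsto.sub tendsto_const_nhds (Filter.Tendsto.const_mul _ h0)
  have hle : legM k k / x^(k+1) - (2*M/(x-1))*0 ≤ legI x k :=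
    le_of_tendsto hlim (Filter.eventually_atTop.2 ⟨k+1, key⟩)
  have hMk : 0 < legM k k := (legM_nonneg_pos k).2
  have : 0 < legM k k / x^(k+1) := by positivity
  linarith

/-- For `x > 1`: `P_k(x) > 0` for all `k`; the convergents `P*_k(x)/P_k(x)` are strictly
increasing for `k ≥ 1`; and each such convergent is `< (1/2)·log((x+1)/(x-1))`. -/
theorem legendre_convergents_increasing (x : ℝ) (hx : 1 < x) :
    (∀ k : ℕ, 0 < (legP k).eval x) ∧
    StrictMonoOn (fun k : ℕ => (legPs k).eval x / (legP k).eval x) (Set.Ici 1) ∧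
    ∀ k : ℕ, 1 ≤ k →
      (legPs k).eval x / (legP k).eval x < (1/2) * Real.log ((x + 1) / (x - 1)) := by
  have hpos : ∀ k : ℕ, 0 < (legP k).eval x := fun k => (legP_pos_mono hx k).1
  have hmono : StrictMono (fun k : ℕ => (legPs k).eval x / (legP k).eval x) := by
    apply strictMono_nat_of_lt_succ
    intro k
    rw [div_lt_div_iff₀ (hpos k) (hpos (k+1))]
    have hw := leg_wronskian (x := x) k
    have : (0:ℝ) < 1/((k:ℝ)+1) := by positivity
    linarith
  refine ⟨hpos, hmono.strictMonoOn _, ?_⟩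
  intro k _
  have hE := (legE hx k).1
  have hI := legI_pos hx k
  rw [div_lt_iff₀ (hpos k)]
  nlinarith [hE, hI]
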